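/- arXiv:1708.01633 — 2 statements merged into one kernel-verified Lean document; each statement's English description precedes it below -/
import Mathlib

section
/- Let K be a differential field of characteristic 0 with field of constants C, let c₁, ..., cₘ ∈ C be linearly independent over ℚ, and let f₁, ..., fₘ ∈ K be nonzero elements with δfⱼ = cⱼ·fⱼ for each j. Then f₁, ..., fₘ are algebraically independent over C. -/
open MvPolynomial Finset

section Aux

variable {K : Type*} [Field K] (δ : K → K)

lemma der_zero (hadd : ∀ x y, δ (x + y) = δ x + δ y) : δ 0 = 0 := by
  have h := hadd 0 0
  rw [add_zero] at h
  linear_combination -h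

lemma der_one (hmul : ∀ x y, δ (x * y) = x * δ y + y * δ x) : δ 1 = 0 := by
  have h := hmul 1 1
  rw [mul_one] at h
  linear_combination -h

lemma der_neg (hadd : ∀ x y, δ (x + y) = δ x + δ y) (x : K) : δ (-x) = -δ x := by
  have h := hadd x (-x)
  rw [add_neg_cancel, der_zero δ hadd] at h
  linear_combination -h

lemma der_sub (hadd : ∀ x y, δ (x + y) = δ x + δ y) (x y : K) :
    δ (x - y) = δ x - δ y := by
  rw [sub_eq_add_neg, hadd, der_neg δ hadd, sub_eq_add_neg]

lemma der_sum (hadd : ∀ x y, δ (x + y) = δ x + δ y) {ι : Type*} (s : Finset ι)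
    (g : ι → K) : δ (∑ i ∈ s, g i) = ∑ i ∈ s, δ (g i) := by
  classical
  induction s using Finset.induction_on with
  | empty => simpa using der_zero δ hadd
  | insert _ _ h ih => rw [Finset.sum_insert h, hadd, ih, Finset.sum_insert h]

lemma der_nat (hadd : ∀ x y, δ (x + y) = δ x + δ y)
    (hmul : ∀ x y, δ (x * y) = x * δ y + y * δ x) (n : ℕ) : δ (n : K) = 0 := by
  induction n with
  | zero => simpa using der_zero δ hadd
  | succ k ih => push_cast; rw [hadd, ih, der_one δ hmul, add_zero]

lemma der_pow (hadd : ∀ x y, δ (x + y) = δ x + δ y)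
    (hmul : ∀ x y, δ (x * y) = x * δ y + y * δ x)
    (x e : K) (hx : δ x = e * x) (n : ℕ) : δ (x ^ n) = (n : K) * e * x ^ n := by
  induction n with
  | zero => simpa using der_one δ hmul
  | succ k ih =>
    rw [pow_succ, hmul, ih, hx]
    push_cast
    ring

lemma der_prod (hadd : ∀ x y, δ (x + y) = δ x + δ y)
    (hmul : ∀ x y, δ (x * y) = x * δ y + y * δ x)
    {ι : Type*} (s : Finset ι) (g e : ι → K)
    (h : ∀ i ∈ s, δ (g i) = e i * g i) :
    δ (∏ i ∈ s, g i) = (∑ i ∈ s, e i) * ∏ i ∈ s, g i := by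
  classical
  induction s using Finset.induction_on with
  | empty => simpa using der_one δ hmul
  | @insert a s ha ih =>
    rw [Finset.prod_insert ha, Finset.sum_insert ha, hmul,
      ih (fun i hi => h i (Finset.mem_insert_of_mem hi)),
      h a (Finset.mem_insert_self a s)]
    ring

end Aux

/-- Eigenvectors of δ whose eigenvalues are constants, ℚ-linearly independent,
are algebraically independent over the constants: no nonzero polynomial with
constant coefficients vanishes at them. -/
theorem eigenvectors_algebraically_independent
    {K : Type*} [Field K] [CharZero K] (δ : K → K)
    (hadd : ∀ x y, δ (x + y) = δ x + δ y)
    (hmul : ∀ x y, δ (x * y) = x * δ y + y * δ x)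
    {m : ℕ} (c : Fin m → K) (hc : ∀ j, δ (c j) = 0)
    (hind : LinearIndependent ℚ c)
    (f : Fin m → K) (hf0 : ∀ j, f j ≠ 0) (hf : ∀ j, δ (f j) = c j * f j)
    (p : MvPolynomial (Fin m) K)
    (hcoeff : ∀ r, δ (p.coeff r) = 0)
    (heval : MvPolynomial.eval f p = 0) :
    p = 0 := by
  classical
  -- the "weight" of a monomial exponent vector
  set w : (Fin m →₀ ℕ) → K := fun r => ∑ j, (r j : K) * c j with hw
  have hδw : ∀ r, δ (w r) = 0 := by
    intro r
    rw [hw]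
    rw [der_sum δ hadd]
    apply Finset.sum_eq_zero
    intro j _
    rw [hmul, hc, der_nat δ hadd hmul]
    ring
  have hprodne : ∀ r : Fin m →₀ ℕ, (∏ j, f j ^ r j) ≠ 0 := by
    intro r
    exact Finset.prod_ne_zero_iff.mpr fun j _ => pow_ne_zero _ (hf0 j)
  have hmon : ∀ r : Fin m →₀ ℕ, δ (∏ j, f j ^ r j) = w r * ∏ j, f j ^ r j := by
    intro r
    exact der_prod δ hadd hmul _ _ _
      (fun j _ => der_pow δ hadd hmul (f j) (c j) (hf j) (r j))
  suffices H : ∀ n (q : MvPolynomial (Fin m) K), q.support.card ≤ n →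
      (∀ r, δ (q.coeff r) = 0) → MvPolynomial.eval f q = 0 → q = 0 by
    exact H p.support.card p le_rfl hcoeff heval
  intro n
  induction n with
  | zero =>
    intro q hcard _ _
    rw [Nat.le_zero, Finset.card_eq_zero, MvPolynomial.support_eq_empty] at hcard
    exact hcard
  | succ n ih =>
    intro q hcard hq0 hqev
    by_contra hq
    obtain ⟨r₀, hr₀⟩ := (MvPolynomial.support_nonempty.mpr hq)
    -- derivative of the evaluation
    have hδev : ∑ r ∈ q.support, (w r * q.coeff r) * ∏ j, f j ^ r j = 0 := by
      have h1 : δ (MvPolynomial.eval f q) =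
          ∑ r ∈ q.support, (w r * q.coeff r) * ∏ j, f j ^ r j := by
        rw [MvPolynomial.eval_eq', der_sum δ hadd]
        apply Finset.sum_congr rfl
        intro r _
        rw [hmul, hmon r, hq0 r]
        ring
      rw [hqev, der_zero δ hadd] at h1
      exact h1.symm
    -- the polynomial with one fewer term
    set q' : MvPolynomial (Fin m) K :=
      ∑ r ∈ q.support, MvPolynomial.monomial r ((w r - w r₀) * q.coeff r) with hq'
    have hq'coeff : ∀ s, q'.coeff s =
        if s ∈ q.support then (w s - w r₀) * q.coeff s else 0 := by
      intro s
      rw [hq', MvPolynomial.coeff_sum]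
      simp only [MvPolynomial.coeff_monomial]
      rw [Finset.sum_ite_eq' q.support s (fun r => (w r - w r₀) * q.coeff r)]
    have hq'sub : q'.support ⊆ q.support.erase r₀ := by
      intro s hs
      rw [MvPolynomial.mem_support_iff, hq'coeff s] at hs
      rw [Finset.mem_erase]
      by_cases h1 : s ∈ q.support
      · refine ⟨?_, h1⟩
        rintro rfl
        simp at hs
      · simp [h1] at hs
    have hq'card : q'.support.card ≤ n := by
      have h1 := Finset.card_le_card hq'sub
      have h2 := Finset.card_erase_of_mem hr₀
      omega
    have hq'c0 : ∀ r, δ (q'.coeff r) = 0 := by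
      intro r
      rw [hq'coeff r]
      split
      · rw [hmul, hq0, der_sub δ hadd, hδw, hδw]
        ring
      · exact der_zero δ hadd
    have hq'ev : MvPolynomial.eval f q' = 0 := by
      rw [hq', map_sum]
      have h1 : ∀ r ∈ q.support, MvPolynomial.eval f
          (MvPolynomial.monomial r ((w r - w r₀) * q.coeff r)) =
          (w r * q.coeff r) * ∏ j, f j ^ r j - w r₀ * (q.coeff r * ∏ j, f j ^ r j) := by
        intro r _
        rw [MvPolynomial.eval_monomial, Finsupp.prod_pow]
        ring
      rw [Finset.sum_congr rfl h1, Finset.sum_sub_distrib, hδev, ← Finset.mul_sum,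
        ← MvPolynomial.eval_eq', hqev, mul_zero, sub_zero]
    have hq'zero : q' = 0 := ih q' hq'card hq'c0 hq'ev
    -- all exponent vectors in support have the same weight as r₀
    have hweq : ∀ s ∈ q.support, w s = w r₀ := by
      intro s hs
      have h1 : q'.coeff s = 0 := by rw [hq'zero]; simp
      rw [hq'coeff s, if_pos hs] at h1
      have h2 : q.coeff s ≠ 0 := MvPolynomial.mem_support_iff.mp hs
      have := mul_eq_zero.mp h1
      rcases this with h | h
      · exact sub_eq_zero.mp h
      · exact absurd h h2
    -- by ℚ-linear independence, the support is a singleton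
    have hsingle : ∀ s ∈ q.support, s = r₀ := by
      intro s hs
      have h1 : ∑ j, ((s j : ℚ) - (r₀ j : ℚ)) • c j = 0 := by
        have h2 := sub_eq_zero.mpr (hweq s hs)
        rw [hw] at h2
        simp only [← Finset.sum_sub_distrib, ← sub_mul] at h2
        rw [← h2]
        apply Finset.sum_congr rfl
        intro j _
        rw [Rat.smul_def]
        push_cast
        ring
      have h3 := Fintype.linearIndependent_iff.mp hind _ h1
      ext j
      have h4 := h3 j
      have h5 : (s j : ℚ) = (r₀ j : ℚ) := by linarith
      exact_mod_cast h5
    have hsupp : q.support = {r₀} :=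
      Finset.eq_singleton_iff_nonempty_unique_mem.mpr
        ⟨⟨r₀, hr₀⟩, hsingle⟩
    have hev1 : MvPolynomial.eval f q = q.coeff r₀ * ∏ j, f j ^ r₀ j := by
      rw [MvPolynomial.eval_eq', hsupp, Finset.sum_singleton]
    rw [hev1] at hqev
    rcases mul_eq_zero.mp hqev with h | h
    · exact MvPolynomial.mem_support_iff.mp hr₀ h
    · exact hprodne r₀ h
end

section
/- Let K be a differential field with constants C, let c₁, ..., cₘ ∈ C, and let f₁, ..., fₘ ∈ K be nonzero with δfⱼ = cⱼ·fⱼ. Suppose G = Σ_{r ∈ I} s_r y^r is a nonzero polynomial in m variables with coefficients s_r ∈ C, having the minimal number of monomials among all nonzero polynomials over C vanishing at (f₁, ..., fₘ). Then for all exponent tuples r, r' ∈ I one has r·c = r'·c, where r·c = r₁c₁ + ... + rₘcₘ. -/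
/-- A nonzero polynomial over the constants vanishing at eigenvectors of δ,
with minimally many monomials, has all its exponent tuples sharing the same
value of r·c. -/
theorem minimal_relation_exponents
    {K : Type*} [Field K] (δ : K → K)
    (hadd : ∀ x y, δ (x + y) = δ x + δ y)
    (hmul : ∀ x y, δ (x * y) = x * δ y + y * δ x)
    {m : ℕ} (c : Fin m → K) (hc : ∀ j, δ (c j) = 0)
    (f : Fin m → K) (hf0 : ∀ j, f j ≠ 0) (hf : ∀ j, δ (f j) = c j * f j)
    (G : MvPolynomial (Fin m) K) (hG0 : G ≠ 0)
    (hGcoeff : ∀ r, δ (G.coeff r) = 0)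
    (hGeval : MvPolynomial.eval f G = 0)
    (hGmin : ∀ G' : MvPolynomial (Fin m) K, G' ≠ 0 →
      (∀ r, δ (G'.coeff r) = 0) → MvPolynomial.eval f G' = 0 →
      G.support.card ≤ G'.support.card) :
    ∀ r ∈ G.support, ∀ r' ∈ G.support,
      ∑ j, (r j : K) * c j = ∑ j, (r' j : K) * c j := by
  -- basic consequences of the derivation axioms
  have h0 : δ 0 = 0 := by
    have h := hadd 0 0
    simp only [add_zero] at h
    exact (left_eq_add.mp h)
  have h1 : δ 1 = 0 := by
    have h := hmul 1 1
    simp only [one_mul, mul_one] at h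
    exact (left_eq_add.mp h)
  have hsum : ∀ {α : Type} (s : Finset α) (g : α → K),
      δ (∑ i ∈ s, g i) = ∑ i ∈ s, δ (g i) := by
    intro α s g
    induction s using Finset.cons_induction with
    | empty => simpa using h0
    | cons a s ha ih => rw [Finset.sum_cons, hadd, ih, Finset.sum_cons]
  have hnat : ∀ n : ℕ, δ (n : K) = 0 := by
    intro n
    induction n with
    | zero => simpa using h0
    | succ n ih => push_cast; rw [hadd, ih, h1, add_zero]
  have hneg : ∀ x : K, δ (-x) = -δ x := by
    intro x
    have h := hadd x (-x)
    rw [add_neg_cancel, h0] at h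
    linear_combination -h
  have hsub : ∀ x y : K, δ (x - y) = δ x - δ y := by
    intro x y
    rw [sub_eq_add_neg, hadd, hneg, sub_eq_add_neg]
  -- derivative of powers of eigenvectors
  have hpow : ∀ (j : Fin m) (n : ℕ), δ (f j ^ n) = (n : K) * c j * f j ^ n := by
    intro j n
    induction n with
    | zero => simpa using h1
    | succ n ih =>
      rw [pow_succ, hmul, ih, hf j]
      push_cast
      ring
  -- derivative of monomials in the fⱼ
  have hprod : ∀ (r : Fin m →₀ ℕ),
      δ (∏ j, f j ^ r j) = (∑ j, (r j : K) * c j) * ∏ j, f j ^ r j := by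
    intro r
    have key : ∀ s : Finset (Fin m),
        δ (∏ j ∈ s, f j ^ r j) = (∑ j ∈ s, (r j : K) * c j) * ∏ j ∈ s, f j ^ r j := by
      intro s
      induction s using Finset.cons_induction with
      | empty => simpa using h1
      | cons a s ha ih =>
        rw [Finset.prod_cons, hmul, ih, hpow, Finset.sum_cons]
        ring
    exact key Finset.univ
  -- the weights are constants
  have hwconst : ∀ (r : Fin m →₀ ℕ), δ (∑ j, (r j : K) * c j) = 0 := by
    intro r
    rw [hsum]
    apply Finset.sum_eq_zero
    intro j _
    rw [hmul, hc j, hnat, mul_zero, mul_zero, add_zero]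
  -- the key identity: δ(eval f G) expands as a weighted sum
  have hkey : ∑ r ∈ G.support, (∑ j, (r j : K) * c j) * (G.coeff r * ∏ j, f j ^ r j) = 0 := by
    have h := congrArg δ hGeval
    rw [h0] at h
    rw [MvPolynomial.eval_eq', hsum] at h
    rw [← h]
    apply Finset.sum_congr rfl
    intro r _
    rw [hmul, hGcoeff, mul_zero, add_zero, hprod]
    ring
  intro r hr r' hr'
  set A : K := ∑ j, (r' j : K) * c j with hA
  -- the auxiliary polynomial
  set G' : MvPolynomial (Fin m) K :=
    ∑ s ∈ G.support, MvPolynomial.monomial s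
      (((∑ j, (s j : K) * c j) - A) * G.coeff s) with hG'
  have hcoeff' : ∀ s, G'.coeff s = ((∑ j, (s j : K) * c j) - A) * G.coeff s := by
    intro s
    rw [hG', MvPolynomial.coeff_sum]
    by_cases hs : s ∈ G.support
    · rw [Finset.sum_eq_single s]
      · rw [MvPolynomial.coeff_monomial, if_pos rfl]
      · intro b _ hb
        rw [MvPolynomial.coeff_monomial, if_neg hb]
      · intro h; exact absurd hs h
    · have : G.coeff s = 0 := by
        simpa [MvPolynomial.mem_support_iff] using hs
      rw [this, mul_zero]
      apply Finset.sum_eq_zero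
      intro b hb
      rw [MvPolynomial.coeff_monomial, if_neg]
      rintro rfl; exact hs hb
  -- G' has constant coefficients
  have hG'coeff : ∀ s, δ (G'.coeff s) = 0 := by
    intro s
    rw [hcoeff' s, hmul, hGcoeff, hsub, hwconst, hA, hwconst]
    simp
  -- G' evaluates to zero
  have hG'eval : MvPolynomial.eval f G' = 0 := by
    rw [hG', map_sum]
    have : ∀ s ∈ G.support,
        MvPolynomial.eval f (MvPolynomial.monomial s
          (((∑ j, (s j : K) * c j) - A) * G.coeff s))
        = (∑ j, (s j : K) * c j) * (G.coeff s * ∏ j, f j ^ s j)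
          - A * (G.coeff s * ∏ j, f j ^ s j) := by
      intro s _
      rw [MvPolynomial.eval_monomial, Finsupp.prod_pow]
      ring
    rw [Finset.sum_congr rfl this, Finset.sum_sub_distrib, hkey, ← Finset.mul_sum]
    have h2 : ∑ s ∈ G.support, G.coeff s * ∏ j, f j ^ s j = 0 := by
      rw [← MvPolynomial.eval_eq']; exact hGeval
    rw [h2, mul_zero, sub_zero]
  -- support of G' is strictly smaller
  have hsupp : G'.support ⊆ G.support.erase r' := by
    intro s hs
    rw [MvPolynomial.mem_support_iff, hcoeff' s] at hs
    rw [Finset.mem_erase, MvPolynomial.mem_support_iff]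
    constructor
    · rintro rfl
      simp [hA] at hs
    · intro h; apply hs; rw [h, mul_zero]
  -- G' must vanish by minimality
  have hG'0 : G' = 0 := by
    by_contra hne
    have h1 := hGmin G' hne hG'coeff hG'eval
    have h2 : G'.support.card ≤ (G.support.erase r').card :=
      Finset.card_le_card hsupp
    have h3 : (G.support.erase r').card < G.support.card :=
      Finset.card_erase_lt_of_mem hr'
    omega
  -- conclude
  have := hcoeff' r
  rw [hG'0, MvPolynomial.coeff_zero] at this
  have hcr : G.coeff r ≠ 0 := MvPolynomial.mem_support_iff.mp hr
  have := (mul_eq_zero.mp this.symm).resolve_right hcr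
  exact sub_eq_zero.mp this
end
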